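/- arXiv:1305.4324 — 5 statements merged into one kernel-verified Lean document; each statement's English description precedes it below -/
import Mathlib

section
/- Let I ⊆ ℝ be an open interval and let σ : I → (0,∞) be twice differentiable with (σ′(μ))² + 3·σ(μ)·σ″(μ) = 0 for all μ ∈ I. Then there exist real constants k and ℓ such that σ(μ)^{4/3} = kμ + ℓ for all μ ∈ I; equivalently, the variance function V = σ² satisfies V(μ) = (kμ + ℓ)^{3/2} on I. -/
/-! Multiplying the equation by `σ ^ (-2/3) / 3` turns it into `(σ' · σ ^ (1/3))' = 0`. Hence
`(σ ^ (4/3))' = (4/3) σ' σ ^ (1/3)` is constant on the interval, so `σ ^ (4/3)` is affine there. -/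

open Real

theorem Convex.exists_affine_of_hasDerivAt_const {s : Set ℝ} (hs : Convex ℝ s) {f : ℝ → ℝ}
    {c : ℝ} (hf : ∀ x ∈ s, HasDerivAt f c x) : ∃ ℓ : ℝ, ∀ x ∈ s, f x = c * x + ℓ := by
  rcases s.eq_empty_or_nonempty with rfl | ⟨x₀, hx₀⟩
  · exact ⟨0, by simp⟩
  refine ⟨f x₀ - c * x₀, fun x hx => ?_⟩
  have hderiv : ∀ y ∈ s, HasDerivWithinAt (fun y => f y - c * y) 0 s y := fun y hy => by
    simpa using ((hf y hy).fun_sub ((hasDerivAt_id y).const_mul c)).hasDerivWithinAt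
  have hbound := hs.norm_image_sub_le_of_norm_hasDerivWithin_le hderiv
    (fun _ _ => by simp : ∀ y ∈ s, ‖(0 : ℝ)‖ ≤ 0) hx₀ hx
  rw [zero_mul, norm_le_zero_iff] at hbound
  linarith

theorem hasDerivAt_deriv_mul_rpow_sub_one {σ : ℝ → ℝ} {μ : ℝ} (p : ℝ) (hσ : 0 < σ μ)
    (hσdiff : DifferentiableAt ℝ σ μ) (hσdiff2 : DifferentiableAt ℝ (deriv σ) μ) :
    HasDerivAt (fun x => deriv σ x * σ x ^ (p - 1))
      (σ μ ^ (p - 2) * (σ μ * deriv (deriv σ) μ + (p - 1) * deriv σ μ ^ 2)) μ := by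
  have hpow := hσdiff.hasDerivAt.rpow_const (p := p - 1) (Or.inl hσ.ne')
  refine (hσdiff2.hasDerivAt.mul hpow).congr_deriv ?_
  have hsplit : σ μ ^ (p - 1) = σ μ * σ μ ^ (p - 2) := by
    rw [show p - 1 = 1 + (p - 2) by ring, rpow_add hσ, rpow_one]
  rw [hsplit, show p - 1 - 1 = p - 2 by ring]
  ring

theorem sigma_ode_zero_case_general
    (I : Set ℝ) (hIconv : Convex ℝ I)
    (σ : ℝ → ℝ) (hσpos : ∀ μ ∈ I, 0 < σ μ)
    (hσdiff : ∀ μ ∈ I, DifferentiableAt ℝ σ μ)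
    (hσdiff2 : ∀ μ ∈ I, DifferentiableAt ℝ (deriv σ) μ)
    (hODE : ∀ μ ∈ I, (deriv σ μ) ^ 2 + 3 * σ μ * deriv (deriv σ) μ = 0) :
    ∃ k ℓ : ℝ, ∀ μ ∈ I,
      σ μ ^ ((4 : ℝ) / 3) = k * μ + ℓ ∧ σ μ ^ 2 = (k * μ + ℓ) ^ ((3 : ℝ) / 2) := by
  have hslope_const : ∀ μ ∈ I, HasDerivAt (fun x => deriv σ x * σ x ^ ((4 : ℝ) / 3 - 1)) 0 μ :=
    fun μ hμ => (hasDerivAt_deriv_mul_rpow_sub_one _ (hσpos μ hμ) (hσdiff μ hμ)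
      (hσdiff2 μ hμ)).congr_deriv (by linear_combination σ μ ^ ((4 : ℝ) / 3 - 2) / 3 * hODE μ hμ)
  obtain ⟨a, ha⟩ := hIconv.exists_affine_of_hasDerivAt_const hslope_const
  have hpow : ∀ μ ∈ I, HasDerivAt (fun x => σ x ^ ((4 : ℝ) / 3)) (4 / 3 * a) μ := fun μ hμ =>
    ((hσdiff μ hμ).hasDerivAt.rpow_const (Or.inl (hσpos μ hμ).ne')).congr_deriv
      (by rw [mul_right_comm, ha μ hμ]; ring)
  obtain ⟨ℓ, hℓ⟩ := hIconv.exists_affine_of_hasDerivAt_const hpow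
  refine ⟨4 / 3 * a, ℓ, fun μ hμ => ⟨hℓ μ hμ, ?_⟩⟩
  rw [← hℓ μ hμ, ← rpow_mul (hσpos μ hμ).le]
  norm_num

/-- If `σ : I → (0,∞)` is twice differentiable on an open interval `I`
and satisfies `(σ′)² + 3σσ″ = 0` on `I`, then `σ^{4/3}` is affine on `I`:
`σ(μ)^{4/3} = kμ + ℓ`, equivalently the variance `V = σ²` satisfies
`V(μ) = (kμ + ℓ)^{3/2}` on `I`. -/
theorem sigma_ode_zero_case
    (I : Set ℝ) (hIopen : IsOpen I) (hIconv : Convex ℝ I)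
    (σ : ℝ → ℝ) (hσpos : ∀ μ ∈ I, 0 < σ μ)
    (hσdiff : ∀ μ ∈ I, DifferentiableAt ℝ σ μ)
    (hσdiff2 : ∀ μ ∈ I, DifferentiableAt ℝ (deriv σ) μ)
    (hODE : ∀ μ ∈ I, (deriv σ μ) ^ 2 + 3 * σ μ * deriv (deriv σ) μ = 0) :
    ∃ k ℓ : ℝ, ∀ μ ∈ I,
      σ μ ^ ((4 : ℝ) / 3) = k * μ + ℓ ∧ σ μ ^ 2 = (k * μ + ℓ) ^ ((3 : ℝ) / 2) :=
  sigma_ode_zero_case_general I hIconv σ hσpos hσdiff hσdiff2 hODE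
end

section
/- Fix k > 0 and an integer n ≥ 1, and define D(μ₀, μ) = k·(log(μ/μ₀) + μ₀/μ − 1) for μ₀, μ > 0. Then the function μ₀ ↦ ∫_0^∞ exp(−n·D(μ₀, μ)) · (√k/μ) dμ is constant on (0,∞). -/
/-! `D(μ₀, μ)` depends on `μ` only through `μ / μ₀`, and the Jeffreys weight `dμ / μ` is the
Haar measure of the multiplicative group `(0, ∞)`, so the substitution `μ = μ₀ x` removes `μ₀`. -/

open MeasureTheory Real Set

theorem integral_Ioi_inv_smul_comp_div {E : Type*} [NormedAddCommGroup E] [NormedSpace ℝ E]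
    (f : ℝ → E) {c : ℝ} (hc : 0 < c) :
    ∫ x in Ioi 0, x⁻¹ • f (x / c) = ∫ x in Ioi 0, x⁻¹ • f x := by
  have hdilate : ∀ x : ℝ, (c⁻¹ * x)⁻¹ • f (c⁻¹ * x) = c • x⁻¹ • f (x / c) := fun x => by
    rw [smul_smul, mul_inv, inv_inv, div_eq_inv_mul]
  have h := integral_comp_mul_left_Ioi (fun x => x⁻¹ • f x) 0 (inv_pos.mpr hc)
  simp only [hdilate, integral_smul, mul_zero, inv_inv] at h
  exact (smul_right_injective E hc.ne') h

theorem gamma_snml_integral_constant_general (k : ℝ) (n : ℕ)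
    (D : ℝ → ℝ → ℝ)
    (hD : ∀ μ₀ μ, D μ₀ μ = k * (Real.log (μ / μ₀) + μ₀ / μ - 1)) :
    ∀ μ₀ μ₁ : ℝ, 0 < μ₀ → 0 < μ₁ →
      (∫ μ in Set.Ioi (0 : ℝ), Real.exp (-(n : ℝ) * D μ₀ μ) * (Real.sqrt k / μ)) =
        ∫ μ in Set.Ioi (0 : ℝ), Real.exp (-(n : ℝ) * D μ₁ μ) * (Real.sqrt k / μ) := by
  intro μ₀ μ₁ h₀ h₁
  set F : ℝ → ℝ := fun x => Real.exp (-(n : ℝ) * (k * (Real.log x + x⁻¹ - 1))) * Real.sqrt k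
  have hreduce : ∀ c, 0 < c →
      (∫ μ in Ioi (0 : ℝ), Real.exp (-(n : ℝ) * D c μ) * (Real.sqrt k / μ)) =
        ∫ x in Ioi 0, x⁻¹ • F x := by
    intro c hc
    rw [← integral_Ioi_inv_smul_comp_div F hc]
    refine integral_congr_ae (ae_of_all _ fun μ => ?_)
    simp only [F, hD, smul_eq_mul, inv_div]
    ring
  rw [hreduce μ₀ h₀, hreduce μ₁ h₁]

/-- For fixed `k > 0` and integer `n ≥ 1`, with
`D(μ₀, μ) = k(log(μ/μ₀) + μ₀/μ − 1)`, the function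
`μ₀ ↦ ∫_0^∞ exp(−n·D(μ₀, μ))·(√k/μ) dμ` is constant on `(0,∞)`. -/
theorem gamma_snml_integral_constant (k : ℝ) (hk : 0 < k) (n : ℕ) (hn : 1 ≤ n)
    (D : ℝ → ℝ → ℝ)
    (hD : ∀ μ₀ μ, D μ₀ μ = k * (Real.log (μ / μ₀) + μ₀ / μ - 1)) :
    ∀ μ₀ μ₁ : ℝ, 0 < μ₀ → 0 < μ₁ →
      (∫ μ in Set.Ioi (0 : ℝ), Real.exp (-(n : ℝ) * D μ₀ μ) * (Real.sqrt k / μ)) =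
        ∫ μ in Set.Ioi (0 : ℝ), Real.exp (-(n : ℝ) * D μ₁ μ) * (Real.sqrt k / μ) :=
  gamma_snml_integral_constant_general k n D hD
end

section
/- Fix an integer n ≥ 1. The function μ₀ ↦ ∫_0^∞ exp(−n·(√μ − √μ₀)²/√μ) · μ^{−3/4} dμ is constant on (0,∞), with constant value 2√π/√n. -/
/-!
Substituting `μ = u ^ 4` turns the integral into `4 ∫₀^∞ exp (-n (u - a / u) ^ 2) du` with
`a = √μ₀`. For integrable `g`, the substitution `v = u - a / u`, a bijection of `(0, ∞)` onto `ℝ`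
with derivative `1 + a / u ^ 2`, combined with the involution `u ↦ a / u`, which exchanges
`u - a / u` and `a / u - u` and has Jacobian `a / u ^ 2`, gives
`∫₀^∞ g (u - a / u) du + ∫₀^∞ g (a / u - u) du = ∫ g` (Cauchy–Schlömilch). For the even Gaussian
the left side is twice the integral in question, which is therefore `√(π / n) / 2` whatever `a`.
-/

open MeasureTheory Real Set

variable {E : Type*} [NormedAddCommGroup E] [NormedSpace ℝ E] {a : ℝ}

lemma image_const_div_Ioi_zero (ha : 0 < a) : (fun u : ℝ => a / u) '' Ioi 0 = Ioi 0 := by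
  refine Subset.antisymm ?_ fun x (hx : 0 < x) => ⟨a / x, div_pos ha hx, div_div_cancel₀ ha.ne'⟩
  rintro _ ⟨u, hu, rfl⟩
  exact div_pos ha hu

lemma hasDerivAt_const_div {u : ℝ} (hu : u ≠ 0) :
    HasDerivAt (fun u : ℝ => a / u) (-(a / u ^ 2)) u := by
  simpa [div_eq_mul_inv] using (hasDerivAt_inv hu).const_mul a

lemma integral_Ioi_comp_const_div (ha : 0 < a) (f : ℝ → E) :
    ∫ u in Ioi 0, (a / u ^ 2) • f (a / u) = ∫ u in Ioi 0, f u := by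
  have hcov := integral_image_eq_integral_abs_deriv_smul measurableSet_Ioi
    (fun u (hu : 0 < u) => (hasDerivAt_const_div (a := a) hu.ne').hasDerivWithinAt)
    (StrictAntiOn.injOn fun u hu _ _ huv => div_lt_div_of_pos_left ha hu huv) f
  rw [image_const_div_Ioi_zero ha] at hcov
  rw [hcov]
  refine setIntegral_congr_fun measurableSet_Ioi fun u (hu : 0 < u) => ?_
  rw [abs_neg, abs_of_pos (by positivity)]

lemma image_sub_const_div_Ioi_zero (ha : 0 < a) :
    (fun u : ℝ => u - a / u) '' Ioi 0 = univ := by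
  refine eq_univ_of_forall fun v => ?_
  -- the positive root of `u ^ 2 - v * u - a = 0`
  set s := √(v ^ 2 + 4 * a)
  have hs : s ^ 2 = v ^ 2 + 4 * a := sq_sqrt (by positivity)
  have hvs : |v| < s := abs_lt_of_sq_lt_sq (by nlinarith) (sqrt_nonneg _)
  have hu : 0 < (v + s) / 2 := by linarith [neg_abs_le v]
  refine ⟨(v + s) / 2, hu, ?_⟩
  have : a / ((v + s) / 2) = (s - v) / 2 := by rw [div_eq_iff hu.ne']; nlinarith
  simp only [this]
  ring

lemma strictMonoOn_sub_const_div (ha : 0 < a) :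
    StrictMonoOn (fun u : ℝ => u - a / u) (Ioi 0) := fun _ hu _ _ huv =>
  sub_lt_sub huv (div_lt_div_of_pos_left ha hu huv)

lemma hasDerivAt_sub_const_div {u : ℝ} (hu : u ≠ 0) :
    HasDerivAt (fun u : ℝ => u - a / u) (1 + a / u ^ 2) u := by
  simpa using (hasDerivAt_id' u).fun_sub (hasDerivAt_const_div (a := a) hu)

lemma integral_Ioi_comp_sub_const_div (ha : 0 < a) (g : ℝ → E) :
    ∫ u in Ioi 0, (1 + a / u ^ 2) • g (u - a / u) = ∫ v, g v := by
  have hcov := integral_image_eq_integral_abs_deriv_smul measurableSet_Ioi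
    (fun u (hu : 0 < u) => (hasDerivAt_sub_const_div (a := a) hu.ne').hasDerivWithinAt)
    (strictMonoOn_sub_const_div ha).injOn g
  rw [image_sub_const_div_Ioi_zero ha, setIntegral_univ] at hcov
  rw [hcov]
  refine setIntegral_congr_fun measurableSet_Ioi fun u _ => ?_
  rw [abs_of_pos (by positivity)]

lemma integrableOn_Ioi_comp_sub_const_div_iff (ha : 0 < a) (g : ℝ → E) :
    IntegrableOn (fun u => (1 + a / u ^ 2) • g (u - a / u)) (Ioi 0) ↔ Integrable g := by
  have hcov := integrableOn_image_iff_integrableOn_abs_deriv_smul measurableSet_Ioi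
    (fun u (hu : 0 < u) => (hasDerivAt_sub_const_div (a := a) hu.ne').hasDerivWithinAt)
    (strictMonoOn_sub_const_div ha).injOn g
  rw [image_sub_const_div_Ioi_zero ha, integrableOn_univ] at hcov
  rw [hcov]
  refine integrableOn_congr_fun (fun u _ => ?_) measurableSet_Ioi
  rw [abs_of_pos (by positivity)]

theorem integral_Ioi_comp_sub_const_div_add {g : ℝ → E} (hg : Integrable g) (ha : 0 < a) :
    (∫ u in Ioi 0, g (u - a / u)) + ∫ u in Ioi 0, g (a / u - u) = ∫ v, g v := by
  have hsmul := (integrableOn_Ioi_comp_sub_const_div_iff ha g).2 hg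
  have hweight (u : ℝ) : 1 ≤ 1 + a / u ^ 2 := le_add_of_nonneg_right (by positivity)
  have hcomp : IntegrableOn (fun u => g (u - a / u)) (Ioi 0) := by
    have hmeas : Measurable fun u : ℝ => (1 + a / u ^ 2)⁻¹ := by fun_prop
    refine IntegrableOn.congr_fun (hsmul.bdd_smul 1 hmeas.aestronglyMeasurable
      (.of_forall fun u => ?_)) (fun u _ => ?_) measurableSet_Ioi
    · rw [norm_of_nonneg (by positivity)]
      exact inv_le_one_of_one_le₀ (hweight u)
    · exact inv_smul_smul₀ (zero_lt_one.trans_le (hweight u)).ne' _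
  have hinv : ∫ u in Ioi 0, g (a / u - u) = ∫ u in Ioi 0, (a / u ^ 2) • g (u - a / u) := by
    rw [← integral_Ioi_comp_const_div ha]
    refine setIntegral_congr_fun measurableSet_Ioi fun u (hu : 0 < u) => ?_
    rw [div_div_cancel₀ ha.ne']
  calc (∫ u in Ioi 0, g (u - a / u)) + ∫ u in Ioi 0, g (a / u - u)
      = (∫ u in Ioi 0, g (u - a / u)) +
          ((∫ u in Ioi 0, (1 + a / u ^ 2) • g (u - a / u)) - ∫ u in Ioi 0, g (u - a / u)) := by
        rw [hinv, ← integral_sub hsmul hcomp]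
        simp only [add_smul, one_smul, add_sub_cancel_left]
    _ = ∫ v, g v := by
        rw [integral_Ioi_comp_sub_const_div ha, add_sub_cancel]

theorem integral_Ioi_gaussian_comp_sub_const_div {b : ℝ} (hb : 0 < b) (ha : 0 < a) :
    ∫ u in Ioi 0, exp (-b * (u - a / u) ^ 2) = √(π / b) / 2 := by
  have h : (∫ u in Ioi 0, exp (-b * (u - a / u) ^ 2)) + ∫ u in Ioi 0, exp (-b * (a / u - u) ^ 2)
      = √(π / b) := by
    rw [← integral_gaussian]
    exact integral_Ioi_comp_sub_const_div_add (integrable_exp_neg_mul_sq hb) ha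
  have hsymm : ∫ u in Ioi 0, exp (-b * (a / u - u) ^ 2) =
      ∫ u in Ioi 0, exp (-b * (u - a / u) ^ 2) := by
    congr with u
    ring_nf
  linarith

theorem integral_Ioi_tweedie_eq_four_mul_integral_Ioi_sub_const_div (b c : ℝ) :
    ∫ μ in Ioi 0, exp (-b * (√μ - c) ^ 2 / √μ) * μ ^ (-(3 : ℝ) / 4) =
      4 * ∫ u in Ioi 0, exp (-b * (u - c / u) ^ 2) := by
  rw [← integral_comp_rpow_Ioi_of_pos (p := 4) (by norm_num), ← integral_const_mul]
  refine setIntegral_congr_fun measurableSet_Ioi fun u (hu : 0 < u) => ?_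
  have hsqrt : √(u ^ (4 : ℝ)) = u ^ 2 := by
    rw [rpow_ofNat, show u ^ 4 = (u ^ 2) ^ 2 by ring, sqrt_sq (by positivity)]
  have hpow : (u ^ (4 : ℝ)) ^ (-(3 : ℝ) / 4) * u ^ ((4 : ℝ) - 1) = 1 := by
    rw [← rpow_mul hu.le, ← rpow_add hu]
    norm_num
  have hexp : (u ^ 2 - c) ^ 2 / u ^ 2 = (u - c / u) ^ 2 := by
    field_simp
  rw [hsqrt, mul_div_assoc, hexp, smul_eq_mul]
  linear_combination 4 * exp (-b * (u - c / u) ^ 2) * hpow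

/-- For an integer `n ≥ 1`, the function
`μ₀ ↦ ∫_0^∞ exp(−n(√μ − √μ₀)²/√μ)·μ^{−3/4} dμ` is constant on `(0,∞)`, with value
`2√π/√n`. -/
theorem tweedie_snml_integral_constant (n : ℕ) (hn : 1 ≤ n) :
    ∀ μ₀ : ℝ, 0 < μ₀ →
      (∫ μ in Set.Ioi (0 : ℝ),
          Real.exp (-(n : ℝ) * (Real.sqrt μ - Real.sqrt μ₀) ^ 2 / Real.sqrt μ) *
            μ ^ (-(3 : ℝ) / 4)) =
        2 * Real.sqrt Real.pi / Real.sqrt n := by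
  intro μ₀ hμ₀
  rw [integral_Ioi_tweedie_eq_four_mul_integral_Ioi_sub_const_div,
    integral_Ioi_gaussian_comp_sub_const_div (by exact_mod_cast hn) (sqrt_pos.2 hμ₀),
    sqrt_div pi_pos.le]
  ring
end

section
/- Let a < b be reals, let σ : [a,b] → (0,∞) be continuous, and define D(x, μ) = ∫_x^μ (t − x)/σ(t)² dt for x, μ ∈ [a,b]. Then for every x in the open interval (a,b), lim_{n→∞} √(n/(2π)) · ∫_a^b exp(−n·D(x, μ))/σ(μ) dμ = 1. -/
open MeasureTheory Real Filter Topology intervalIntegral Set Asymptotics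

/-!
Laplace's method. As `∂²D(x, μ)/∂μ² = 1/σ(μ)²` and `D(x, μ)` vanishes to second order at
`μ = x`, the phase is `D(x, μ) = (μ - x)²/(2σ(x)²) + o((μ - x)²)` near `x`, while
`D(x, μ) ≥ (μ - x)²/(2M²)` on `[a, b]` with `M = max σ`. After substituting `μ = x + v/√n`
the integrand tends pointwise to `exp(-v²/(2σ(x)²))/σ(x)` and is dominated by a fixed
Gaussian, so by dominated convergence `√n ∫ exp(-n D(x, μ))/σ(μ) dμ → √(2π σ(x)²)/σ(x) = √(2π)`.
-/

lemma integral_sub_mul_const (x μ k : ℝ) : ∫ t in x..μ, (t - x) * k = k / 2 * (μ - x) ^ 2 := by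
  rw [intervalIntegral.integral_mul_const, integral_comp_sub_right (fun t => t), integral_id]
  ring

section Phase

variable {x μ : ℝ} {w : ℝ → ℝ}

lemma integral_sub_mul_nonneg (hw : ∀ t ∈ uIcc x μ, 0 ≤ w t) :
    0 ≤ ∫ t in x..μ, (t - x) * w t := by
  rcases le_total x μ with hxμ | hμx
  · exact integral_nonneg hxμ fun t ht =>
      mul_nonneg (sub_nonneg.2 ht.1) (hw t (Icc_subset_uIcc ht))
  · rw [integral_symm, ← intervalIntegral.integral_neg]
    exact integral_nonneg hμx fun t ht => neg_nonneg.2 <|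
      mul_nonpos_of_nonpos_of_nonneg (sub_nonpos.2 ht.2) (hw t (Icc_subset_uIcc' ht))

lemma mul_sq_le_integral_sub_mul {k : ℝ} (hw : ∀ t ∈ uIcc x μ, k ≤ w t)
    (hint : IntervalIntegrable (fun t => (t - x) * w t) volume x μ) :
    k / 2 * (μ - x) ^ 2 ≤ ∫ t in x..μ, (t - x) * w t := by
  have hk : IntervalIntegrable (fun t => (t - x) * k) volume x μ := by
    apply Continuous.intervalIntegrable; fun_prop
  rw [← integral_sub_mul_const, ← sub_nonneg, ← integral_sub hint hk]
  simpa only [mul_sub] using integral_sub_mul_nonneg fun t ht => sub_nonneg.2 (hw t ht)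

lemma isLittleO_integral_sub_mul (hw : ContinuousAt w x)
    (hint : ∀ᶠ μ in 𝓝 x, IntervalIntegrable (fun t => (t - x) * w t) volume x μ) :
    (fun μ => (∫ t in x..μ, (t - x) * w t) - w x / 2 * (μ - x) ^ 2) =o[𝓝 x]
      fun μ => (μ - x) ^ 2 := by
  refine isLittleO_iff.2 fun ε hε => ?_
  obtain ⟨δ, hδ, hwδ⟩ := Metric.eventually_nhds_iff_ball.1 <|
    hw.eventually (Metric.closedBall_mem_nhds (w x) hε)
  filter_upwards [hint, Metric.ball_mem_nhds x hδ] with μ hμint hμ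
  have hk : IntervalIntegrable (fun t => (t - x) * w x) volume x μ := by
    apply Continuous.intervalIntegrable; fun_prop
  rw [← integral_sub_mul_const, ← integral_sub hμint hk]
  refine (intervalIntegral.norm_integral_le_of_norm_le_const (C := ε * |μ - x|)
    fun t ht => ?_).trans_eq (by rw [norm_pow, Real.norm_eq_abs, sq, mul_assoc])
  have htx : |t - x| ≤ |μ - x| := abs_sub_left_of_mem_uIcc (uIoc_subset_uIcc ht)
  have htδ : t ∈ Metric.ball x δ := by
    rw [Metric.mem_ball, dist_eq] at hμ ⊢
    exact htx.trans_lt hμ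
  rw [← mul_sub, norm_mul, Real.norm_eq_abs, Real.norm_eq_abs, mul_comm ε]
  exact mul_le_mul htx (hwδ t htδ) (abs_nonneg _) (abs_nonneg _)

end Phase

section Laplace

variable {a b x c q κ : ℝ} {f g : ℝ → ℝ}

noncomputable def zoom (a b x c : ℝ) (h : ℝ → ℝ) : ℝ → ℝ :=
  (Ioc (c * (a - x)) (c * (b - x))).indicator fun v => h (x + v / c)

lemma add_div_mem_Icc {v : ℝ} (hc : 0 < c) (hv : v ∈ Ioc (c * (a - x)) (c * (b - x))) :
    x + v / c ∈ Icc a b := by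
  have h₁ : a - x < v / c := (lt_div_iff₀ hc).2 (by linarith [hv.1])
  have h₂ : v / c ≤ b - x := (div_le_iff₀ hc).2 (by linarith [hv.2])
  constructor <;> linarith

lemma mul_integral_eq_integral_zoom (hab : a ≤ b) (hc : 0 < c) (h : ℝ → ℝ) :
    c * ∫ μ in a..b, h μ = ∫ v, zoom a b x c h v := by
  have hle : c * (a - x) ≤ c * (b - x) := by gcongr
  rw [zoom, MeasureTheory.integral_indicator measurableSet_Ioc, ← integral_of_le hle,
    integral_comp_add_div h hc.ne', smul_eq_mul]
  congr 2 <;> field_simp <;> ring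

lemma aestronglyMeasurable_zoom {h : ℝ → ℝ} (hc : 0 < c) (hh : ContinuousOn h (Icc a b)) :
    AEStronglyMeasurable (zoom a b x c h) := by
  refine (aestronglyMeasurable_indicator_iff measurableSet_Ioc).2 <|
    ContinuousOn.aestronglyMeasurable ?_ measurableSet_Ioc
  exact hh.comp (by fun_prop) fun v hv => add_div_mem_Icc hc hv

lemma norm_zoom_le {h φ : ℝ → ℝ} (hc : 0 < c)
    (hh : ∀ μ ∈ Icc a b, ‖h μ‖ ≤ φ (c * (μ - x)))
    {v : ℝ} (hφ : 0 ≤ φ v) : ‖zoom a b x c h v‖ ≤ φ v := by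
  by_cases hv : v ∈ Ioc (c * (a - x)) (c * (b - x))
  · rw [zoom, indicator_of_mem hv]
    simpa [mul_div_cancel₀ v hc.ne'] using hh _ (add_div_mem_Icc hc hv)
  · rwa [zoom, indicator_of_notMem hv, norm_zero]

lemma tendsto_add_div_atTop (x v : ℝ) : Tendsto (fun c : ℝ => x + v / c) atTop (𝓝 x) := by
  simpa using tendsto_const_nhds.add (tendsto_const_nhds (x := v).div_atTop tendsto_id)

lemma tendsto_zoom_apply {h : ℝ → ℝ → ℝ} {v L : ℝ} (hx : x ∈ Ioo a b)
    (hh : Tendsto (fun c => h c (x + v / c)) atTop (𝓝 L)) :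
    Tendsto (fun c => zoom a b x c (h c) v) atTop (𝓝 L) := by
  refine hh.congr' ?_
  filter_upwards [(tendsto_id.atTop_mul_const_of_neg (sub_neg.2 hx.1)).eventually_lt_atBot v,
    (tendsto_id.atTop_mul_const (sub_pos.2 hx.2)).eventually_ge_atTop v] with c h₁ h₂
  exact (indicator_of_mem (show v ∈ Ioc (c * (a - x)) (c * (b - x)) from ⟨h₁, h₂⟩)
    (fun v => h c (x + v / c))).symm

lemma tendsto_sq_mul_comp_add_div
    (hf : (fun μ => f μ - q * (μ - x) ^ 2) =o[𝓝 x] fun μ => (μ - x) ^ 2) (v : ℝ) :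
    Tendsto (fun c : ℝ => c ^ 2 * f (x + v / c)) atTop (𝓝 (q * v ^ 2)) := by
  have hsq : ∀ᶠ c : ℝ in atTop, c ^ 2 * (x + v / c - x) ^ 2 = v ^ 2 := by
    filter_upwards [eventually_ne_atTop 0] with c hc
    field_simp
    ring
  have h := ((isBigO_refl (fun c : ℝ => c ^ 2) atTop).mul_isLittleO
    (hf.comp_tendsto (tendsto_add_div_atTop x v))).trans_isBigO
    ((isBigO_const_one ℝ (v ^ 2) atTop).congr' (hsq.mono fun _ h => h.symm) .rfl)
  rw [← tendsto_sub_nhds_zero_iff]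
  refine ((isLittleO_one_iff ℝ).1 h).congr' ?_
  filter_upwards [hsq] with c hc
  simp only [Function.comp_apply]
  linear_combination (-q) * hc

theorem tendsto_mul_integral_exp_neg_sq_mul (hx : x ∈ Ioo a b) (hf : ContinuousOn f (Icc a b))
    (hg : ContinuousOn g (Icc a b)) (hκ : 0 < κ)
    (hf_lower : ∀ μ ∈ Icc a b, κ * (μ - x) ^ 2 ≤ f μ)
    (hf_local : (fun μ => f μ - q * (μ - x) ^ 2) =o[𝓝 x] fun μ => (μ - x) ^ 2) :
    Tendsto (fun c : ℝ => c * ∫ μ in a..b, exp (-c ^ 2 * f μ) * g μ) atTop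
      (𝓝 (√(π / q) * g x)) := by
  obtain ⟨B, hB⟩ := isCompact_Icc.exists_bound_of_continuousOn hg
  have hB₀ : 0 ≤ B := (norm_nonneg _).trans (hB x (Ioo_subset_Icc_self hx))
  have hlim : Tendsto (fun c => ∫ v, zoom a b x c (fun μ => exp (-c ^ 2 * f μ) * g μ) v) atTop
      (𝓝 (∫ v, exp (-q * v ^ 2) * g x)) := by
    refine tendsto_integral_filter_of_dominated_convergence (fun v => B * exp (-κ * v ^ 2))
      ?_ ?_ ((integrable_exp_neg_mul_sq hκ).const_mul B) ?_
    · filter_upwards [eventually_gt_atTop 0] with c hc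
      exact aestronglyMeasurable_zoom hc
        ((continuous_exp.comp_continuousOn (continuousOn_const.mul hf)).mul hg)
    · filter_upwards [eventually_gt_atTop 0] with c hc
      refine .of_forall fun v => norm_zoom_le (φ := fun v => B * exp (-κ * v ^ 2)) hc
        (fun μ hμ => ?_) (mul_nonneg hB₀ (exp_nonneg _))
      have hexp : -c ^ 2 * f μ ≤ -κ * (c * (μ - x)) ^ 2 := by
        nlinarith [hf_lower μ hμ, sq_nonneg c]
      rw [norm_mul, norm_of_nonneg (exp_nonneg _), mul_comm]
      exact mul_le_mul (hB μ hμ) (exp_le_exp.2 hexp) (exp_nonneg _) hB₀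
    · refine .of_forall fun v => tendsto_zoom_apply hx ?_
      simp only [neg_mul]
      exact (tendsto_sq_mul_comp_add_div hf_local v).neg.rexp.mul
        ((hg.continuousAt (Icc_mem_nhds hx.1 hx.2)).tendsto.comp (tendsto_add_div_atTop x v))
  rw [MeasureTheory.integral_mul_const, integral_gaussian] at hlim
  refine hlim.congr' ?_
  filter_upwards [eventually_gt_atTop 0] with c hc
  exact (mul_integral_eq_integral_zoom (hx.1.trans hx.2).le hc _).symm

theorem tendsto_sqrt_mul_integral_exp_neg_mul (hx : x ∈ Ioo a b) (hf : ContinuousOn f (Icc a b))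
    (hg : ContinuousOn g (Icc a b)) (hκ : 0 < κ)
    (hf_lower : ∀ μ ∈ Icc a b, κ * (μ - x) ^ 2 ≤ f μ)
    (hf_local : (fun μ => f μ - q * (μ - x) ^ 2) =o[𝓝 x] fun μ => (μ - x) ^ 2) :
    Tendsto (fun t : ℝ => √t * ∫ μ in a..b, exp (-t * f μ) * g μ) atTop
      (𝓝 (√(π / q) * g x)) := by
  refine ((tendsto_mul_integral_exp_neg_sq_mul hx hf hg hκ hf_lower hf_local).comp
    tendsto_sqrt_atTop).congr' ?_
  filter_upwards [eventually_ge_atTop 0] with t ht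
  simp only [Function.comp_apply, sq_sqrt ht]

end Laplace

theorem tendsto_sqrt_mul_integral_exp_neg_mul_integral_sub_mul {a b x k : ℝ} {w g : ℝ → ℝ}
    (hx : x ∈ Ioo a b) (hw : ContinuousOn w (Icc a b)) (hk : 0 < k)
    (hwk : ∀ t ∈ Icc a b, k ≤ w t) (hg : ContinuousOn g (Icc a b)) :
    Tendsto (fun t : ℝ => √t * ∫ μ in a..b, exp (-t * ∫ s in x..μ, (s - x) * w s) * g μ)
      atTop (𝓝 (√(π / (w x / 2)) * g x)) := by
  have hab : a ≤ b := (hx.1.trans hx.2).le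
  have hxI : x ∈ Icc a b := Ioo_subset_Icc_self hx
  have hxnhds : Icc a b ∈ 𝓝 x := Icc_mem_nhds hx.1 hx.2
  have hF : ContinuousOn (fun s => (s - x) * w s) (Icc a b) :=
    (continuousOn_id.sub continuousOn_const).mul hw
  have hint : ∀ μ ∈ Icc a b, IntervalIntegrable (fun s => (s - x) * w s) volume x μ :=
    fun μ hμ => (hF.mono (uIcc_subset_Icc hxI hμ)).intervalIntegrable
  have hcont : ContinuousOn (fun μ => ∫ s in x..μ, (s - x) * w s) (Icc a b) := by
    simpa only [uIcc_of_le hab] using continuousOn_primitive_interval'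
      (hF.intervalIntegrable_of_Icc (μ := volume) hab) ((uIcc_of_le hab).symm ▸ hxI)
  exact tendsto_sqrt_mul_integral_exp_neg_mul hx hcont hg (half_pos hk)
    (fun μ hμ => mul_sq_le_integral_sub_mul (fun t ht => hwk t (uIcc_subset_Icc hxI hμ ht))
      (hint μ hμ))
    (isLittleO_integral_sub_mul (hw.continuousAt hxnhds) (eventually_of_mem hxnhds hint))

theorem laplace_interior_limit_general (a b : ℝ)
    (σ : ℝ → ℝ) (hσcont : ContinuousOn σ (Set.Icc a b))
    (hσpos : ∀ t ∈ Set.Icc a b, 0 < σ t)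
    (D : ℝ → ℝ → ℝ) (hD : ∀ x μ, D x μ = ∫ t in x..μ, (t - x) / (σ t) ^ 2) :
    ∀ x ∈ Set.Ioo a b,
      Tendsto
        (fun n : ℕ =>
          Real.sqrt (n / (2 * Real.pi)) *
            ∫ μ in a..b, Real.exp (-(n : ℝ) * D x μ) / σ μ)
        atTop (𝓝 1) := by
  intro x hx
  have hxI : x ∈ Icc a b := Ioo_subset_Icc_self hx
  have hσ₀ : ∀ t ∈ Icc a b, σ t ≠ 0 := fun t ht => (hσpos t ht).ne'
  obtain ⟨t₁, ht₁, hmax⟩ := isCompact_Icc.exists_isMaxOn ⟨x, hxI⟩ hσcont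
  have hlaplace := tendsto_sqrt_mul_integral_exp_neg_mul_integral_sub_mul
    (w := fun t => (σ t ^ 2)⁻¹) (g := fun μ => (σ μ)⁻¹) hx
    ((hσcont.pow 2).inv₀ fun t ht => pow_ne_zero 2 (hσ₀ t ht))
    (inv_pos.2 (pow_pos (hσpos t₁ ht₁) 2))
    (fun t ht => inv_anti₀ (pow_pos (hσpos t ht) 2)
      (pow_le_pow_left₀ (hσpos t ht).le (hmax ht) 2))
    (hσcont.inv₀ hσ₀)
  have hs : 0 < σ x := hσpos x hxI
  have hval : √(π / ((σ x ^ 2)⁻¹ / 2)) * (σ x)⁻¹ = √(2 * π) := by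
    rw [show π / ((σ x ^ 2)⁻¹ / 2) = 2 * π * σ x ^ 2 by field_simp, sqrt_mul (by positivity),
      sqrt_sq hs.le, mul_inv_cancel_right₀ hs.ne']
  have h := (hlaplace.comp tendsto_natCast_atTop_atTop).const_mul (√(2 * π))⁻¹
  rw [hval, inv_mul_cancel₀ (by positivity)] at h
  refine h.congr fun n => ?_
  simp only [Function.comp_apply, hD, div_eq_mul_inv, sqrt_mul (Nat.cast_nonneg n), sqrt_inv]
  ring

/-- Laplace approximation at an interior point: for continuous
`σ : [a,b] → (0,∞)` and `D(x, μ) = ∫_x^μ (t − x)/σ(t)² dt`, for every `x ∈ (a,b)`,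
`√(n/(2π)) · ∫_a^b exp(−n·D(x, μ))/σ(μ) dμ → 1` as `n → ∞`. -/
theorem laplace_interior_limit (a b : ℝ) (hab : a < b)
    (σ : ℝ → ℝ) (hσcont : ContinuousOn σ (Set.Icc a b))
    (hσpos : ∀ t ∈ Set.Icc a b, 0 < σ t)
    (D : ℝ → ℝ → ℝ) (hD : ∀ x μ, D x μ = ∫ t in x..μ, (t - x) / (σ t) ^ 2) :
    ∀ x ∈ Set.Ioo a b,
      Tendsto
        (fun n : ℕ =>
          Real.sqrt (n / (2 * Real.pi)) *
            ∫ μ in a..b, Real.exp (-(n : ℝ) * D x μ) / σ μ)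
        atTop (𝓝 1) :=
  laplace_interior_limit_general a b σ hσcont hσpos D hD
end

section
/- Let Γ be a nonempty set and p : Γ → ℝ → [0,∞) a family of measurable density functions. Fix integers 0 ≤ m < n. For x = (x₁,…,xₙ) ∈ ℝⁿ define the SNML conditional joint density S_p(x) = ∏_{t=m+1}^{n} [sup_{γ∈Γ} ∏_{i=1}^{t} p(γ, x_i)] / [∫_ℝ sup_{γ∈Γ} ((∏_{i=1}^{t−1} p(γ, x_i)) · p(γ, y)) dy], assuming each supremum is finite and each denominator is positive and finite. Let f : ℝ → ℝ be a bijection that is continuously differentiable with continuously differentiable inverse, and define q(γ, y) = p(γ, f⁻¹(y)) · |(f⁻¹)′(y)|. If for every such n, every x ∈ ℝⁿ, and every permutation π of {1,…,n} fixing 1,…,m pointwise one has S_p(x∘π) = S_p(x), then for every y ∈ ℝⁿ and every such permutation π one has S_q(y∘π) = S_q(y). Moreover S_q(y) = S_p(f⁻¹(y₁),…,f⁻¹(yₙ)) · ∏_{t=m+1}^{n} |(f⁻¹)′(y_t)|. -/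
/-!
With `x = f⁻¹ ∘ y`, every one-step factor of `S_q(y)` is the corresponding factor of `S_p(x)`
times `|(f⁻¹)′(y_t)|`: the weights `|(f⁻¹)′(y_i)|`, `i < t`, pull out of the suprema
and cancel between numerator and denominator, and the change of variables `u = f⁻¹(z)` absorbs
the remaining weight inside the normalizing integral. The Jacobian product over `t ∈ [m, n)` is
invariant under permutations of `[m, n)`, so exchangeability transfers from `p` to `q`.
-/

open MeasureTheory Real Finset

/-- The SNML conditional joint density of the (0-indexed) sequence `x 0, …, x (n-1)`,
conditioned on the initial segment `x 0, …, x (m-1)`: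
`S_p(x) = ∏_{t=m}^{n-1} [sup_γ ∏_{i≤t} p γ (x i)] / [∫ sup_γ (∏_{i<t} p γ (x i)) · p γ y dy]`. -/
noncomputable def snmlJoint {Γ : Type*} (p : Γ → ℝ → ℝ) (m n : ℕ) (x : ℕ → ℝ) : ℝ :=
  ∏ t ∈ Finset.Ico m n,
    (⨆ γ : Γ, ∏ i ∈ Finset.range (t + 1), p γ (x i)) /
      ∫ y : ℝ, ⨆ γ : Γ, (∏ i ∈ Finset.range t, p γ (x i)) * p γ y

open Function

theorem deriv_ne_zero_of_rightInverse {𝕜 : Type*} [NontriviallyNormedField 𝕜] {f g : 𝕜 → 𝕜}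
    (hfg : RightInverse g f) {z : 𝕜} (hf : DifferentiableAt 𝕜 f (g z))
    (hg : DifferentiableAt 𝕜 g z) : deriv g z ≠ 0 := by
  intro h
  have hcomp : HasDerivAt (f ∘ g) (deriv f (g z) * deriv g z) z :=
    hf.hasDerivAt.comp z hg.hasDerivAt
  rw [hfg.comp_eq_id, h, mul_zero] at hcomp
  exact zero_ne_one (hcomp.unique (hasDerivAt_id z))

theorem integral_abs_deriv_smul_comp_of_bijective {E : Type*} [NormedAddCommGroup E]
    [NormedSpace ℝ E] {g : ℝ → ℝ} (hg : Differentiable ℝ g) (hbij : Bijective g) (F : ℝ → E) :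
    ∫ z, |deriv g z| • F (g z) = ∫ u, F u := by
  have h := integral_image_eq_integral_abs_deriv_smul MeasurableSet.univ
    (fun z _ => (hg z).hasDerivAt.hasDerivWithinAt) hbij.injective.injOn F
  rwa [Set.image_univ_of_surjective hbij.surjective, Measure.restrict_univ, eq_comm] at h

section Reweight

variable {Γ : Type*} {p q : Γ → ℝ → ℝ} {g w : ℝ → ℝ}

theorem prod_range_eq_prod_weight_mul (hq : ∀ γ y, q γ y = p γ (g y) * w y) (γ : Γ) (k : ℕ)
    (y : ℕ → ℝ) :
    ∏ i ∈ range k, q γ (y i) = (∏ i ∈ range k, w (y i)) * ∏ i ∈ range k, p γ (g (y i)) := by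
  simp only [hq, prod_mul_distrib, mul_comm]

theorem snmlJoint_eq_mul_prod_weight (hq : ∀ γ y, q γ y = p γ (g y) * w y)
    (hw : ∀ y, 0 < w y) (hcov : ∀ F : ℝ → ℝ, ∫ z, w z * F (g z) = ∫ u, F u)
    (m n : ℕ) (y : ℕ → ℝ) :
    snmlJoint q m n y = snmlJoint p m n (fun i => g (y i)) * ∏ t ∈ Ico m n, w (y t) := by
  unfold snmlJoint
  beta_reduce
  rw [← prod_mul_distrib]
  refine prod_congr rfl fun t _ => ?_
  set W : ℕ → ℝ := fun k => ∏ i ∈ range k, w (y i)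
  have hW_pos : ∀ k, 0 < W k := fun k => prod_pos fun i _ => hw (y i)
  have hnum : ⨆ γ, ∏ i ∈ range (t + 1), q γ (y i)
      = W (t + 1) * ⨆ γ, ∏ i ∈ range (t + 1), p γ (g (y i)) := by
    simp_rw [prod_range_eq_prod_weight_mul hq]
    exact (Real.mul_iSup_of_nonneg (hW_pos _).le _).symm
  have hden : ∫ z, ⨆ γ, (∏ i ∈ range t, q γ (y i)) * q γ z
      = W t * ∫ u, ⨆ γ, (∏ i ∈ range t, p γ (g (y i))) * p γ u := by
    calc ∫ z, ⨆ γ, (∏ i ∈ range t, q γ (y i)) * q γ z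
        = ∫ z, W t * (w z * ⨆ γ, (∏ i ∈ range t, p γ (g (y i))) * p γ (g z)) := by
          congr 1
          ext z
          rw [Real.mul_iSup_of_nonneg (hw z).le, Real.mul_iSup_of_nonneg (hW_pos t).le]
          congr 1
          ext γ
          rw [prod_range_eq_prod_weight_mul hq, hq]
          ring
      _ = W t * ∫ u, ⨆ γ, (∏ i ∈ range t, p γ (g (y i))) * p γ u := by
          rw [integral_const_mul,
            hcov fun u => ⨆ γ, (∏ i ∈ range t, p γ (g (y i))) * p γ u]
  have hW_succ : W (t + 1) = W t * w (y t) := prod_range_succ _ t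
  rw [hnum, hden, hW_succ, mul_assoc, mul_div_mul_left _ _ (hW_pos t).ne']
  ring

end Reweight

theorem snml_exchangeability_transport_general
    {Γ : Type*} (p : Γ → ℝ → ℝ)
    (m n : ℕ) (hmn : m < n)
    -- the transformation f and its inverse
    (f finv : ℝ → ℝ)
    (hfinv_left : Function.LeftInverse finv f)
    (hfinv_right : Function.RightInverse finv f)
    (hf_smooth : ContDiff ℝ 1 f) (hfinv_smooth : ContDiff ℝ 1 finv)
    -- the transformed family of densities
    (q : Γ → ℝ → ℝ) (hq : ∀ γ y, q γ y = p γ (finv y) * |deriv finv y|)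
    -- SNML exchangeability of p
    (hExch : ∀ n' : ℕ, m < n' → ∀ x : ℕ → ℝ, ∀ e : Equiv.Perm ℕ,
      (∀ i, i < m → e i = i) → (∀ i, n' ≤ i → e i = i) →
      snmlJoint p m n' (x ∘ e) = snmlJoint p m n' x) :
    (∀ y : ℕ → ℝ, ∀ e : Equiv.Perm ℕ,
      (∀ i, i < m → e i = i) → (∀ i, n ≤ i → e i = i) →
      snmlJoint q m n (y ∘ e) = snmlJoint q m n y) ∧
    (∀ y : ℕ → ℝ,
      snmlJoint q m n y =
        snmlJoint p m n (fun i => finv (y i)) *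
          ∏ t ∈ Finset.Ico m n, |deriv finv (y t)|) := by
  have hfinv_diff : Differentiable ℝ finv := hfinv_smooth.differentiable one_ne_zero
  have hderiv_ne : ∀ z, deriv finv z ≠ 0 := fun z =>
    deriv_ne_zero_of_rightInverse hfinv_right (hf_smooth.differentiable one_ne_zero _)
      (hfinv_diff z)
  have htransport : ∀ y : ℕ → ℝ, snmlJoint q m n y =
      snmlJoint p m n (fun i => finv (y i)) * ∏ t ∈ Ico m n, |deriv finv (y t)| :=
    snmlJoint_eq_mul_prod_weight hq (fun z => abs_pos.2 (hderiv_ne z))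
      (fun F => by
        simpa only [smul_eq_mul] using integral_abs_deriv_smul_comp_of_bijective hfinv_diff
          ⟨hfinv_right.injective, hfinv_left.surjective⟩ F) m n
  refine ⟨fun y e he_low he_high => ?_, htransport⟩
  rw [htransport, htransport]
  congr 1
  · exact hExch n hmn (fun i => finv (y i)) e he_low he_high
  · exact e.prod_comp _ (fun t => |deriv finv (y t)|) fun i hi =>
      mem_Ico.2 ⟨not_lt.1 fun h => hi (he_low i h), not_le.1 fun h => hi (he_high i h)⟩

/-- A smooth one-to-one transformation of the observation variable
preserves SNML exchangeability, and the transformed SNML density satisfies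
`S_q(y) = S_p(f⁻¹(y₁),…,f⁻¹(yₙ)) · ∏_{t=m+1}^{n} |(f⁻¹)′(y_t)|`. -/
theorem snml_exchangeability_transport
    {Γ : Type*} [Nonempty Γ] (p : Γ → ℝ → ℝ)
    (hp_nonneg : ∀ γ x, 0 ≤ p γ x) (hp_meas : ∀ γ, Measurable (p γ))
    (m n : ℕ) (hmn : m < n)
    -- regularity: each supremum is finite, each denominator positive and finite
    (hbdd : ∀ k : ℕ, ∀ x : ℕ → ℝ,
      BddAbove (Set.range fun γ : Γ => ∏ i ∈ Finset.range k, p γ (x i)))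
    (hint : ∀ t : ℕ, ∀ x : ℕ → ℝ, t ∈ Finset.Ico m n →
      Integrable (fun y : ℝ => ⨆ γ : Γ, (∏ i ∈ Finset.range t, p γ (x i)) * p γ y))
    (hpos : ∀ t : ℕ, ∀ x : ℕ → ℝ, t ∈ Finset.Ico m n →
      0 < ∫ y : ℝ, ⨆ γ : Γ, (∏ i ∈ Finset.range t, p γ (x i)) * p γ y)
    -- the transformation f and its inverse
    (f finv : ℝ → ℝ) (hf_bij : Function.Bijective f)
    (hfinv_left : Function.LeftInverse finv f)
    (hfinv_right : Function.RightInverse finv f)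
    (hf_smooth : ContDiff ℝ 1 f) (hfinv_smooth : ContDiff ℝ 1 finv)
    -- the transformed family of densities
    (q : Γ → ℝ → ℝ) (hq : ∀ γ y, q γ y = p γ (finv y) * |deriv finv y|)
    -- SNML exchangeability of p
    (hExch : ∀ n' : ℕ, m < n' → ∀ x : ℕ → ℝ, ∀ e : Equiv.Perm ℕ,
      (∀ i, i < m → e i = i) → (∀ i, n' ≤ i → e i = i) →
      snmlJoint p m n' (x ∘ e) = snmlJoint p m n' x) :
    (∀ y : ℕ → ℝ, ∀ e : Equiv.Perm ℕ,
      (∀ i, i < m → e i = i) → (∀ i, n ≤ i → e i = i) →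
      snmlJoint q m n (y ∘ e) = snmlJoint q m n y) ∧
    (∀ y : ℕ → ℝ,
      snmlJoint q m n y =
        snmlJoint p m n (fun i => finv (y i)) *
          ∏ t ∈ Finset.Ico m n, |deriv finv (y t)|) :=
  snml_exchangeability_transport_general p m n hmn f finv hfinv_left hfinv_right hf_smooth
    hfinv_smooth q hq hExch
end
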